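/- Suppose Q is a solution of the Riccati equation, δ and D are invertible m×m matrices with δD = R₀ − γQB, and C∘ = δ⁻¹(C − γQA), β∘ = (β − αQB)D⁻¹. Then for every z ∈ ℂ such that I − zA and zI − α are invertible, one has the factorization R₀ + zC(I − zA)⁻¹B + γ(zI − α)⁻¹β = (δ + γ(zI − α)⁻¹β∘)(D + zC∘(I − zA)⁻¹B). -/
import Mathlib


open Matrix

lemma aux_key {m s t : ℕ} (z : ℂ)
    (Q : Matrix (Fin t) (Fin s) ℂ) (A : Matrix (Fin s) (Fin s) ℂ)
    (B : Matrix (Fin s) (Fin m) ℂ) (γ : Matrix (Fin m) (Fin t) ℂ)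
    (α : Matrix (Fin t) (Fin t) ℂ)
    (X : Matrix (Fin s) (Fin s) ℂ) (Y : Matrix (Fin t) (Fin t) ℂ)
    (hX : (1 - z • A) * X = 1)
    (hY : Y * (z • (1 : Matrix (Fin t) (Fin t) ℂ) - α) = 1) :
    z • (γ * Y * ((Q - α * Q * A) * (X * B)))
      = γ * Q * B + z • (γ * (Q * A) * (X * B)) + γ * Y * (α * Q * B) := by
  have hXB : (1 - z • A) * (X * B) = B := by rw [← Matrix.mul_assoc, hX, Matrix.one_mul]
  have hYc : ∀ N : Matrix (Fin t) (Fin m) ℂ,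
      Y * ((z • (1 : Matrix (Fin t) (Fin t) ℂ) - α) * N) = N := fun N => by
    rw [← Matrix.mul_assoc, hY, Matrix.one_mul]
  have hM : z • (Q - α * Q * A)
      = (z • (1 : Matrix (Fin t) (Fin t) ℂ) - α) * (Q * (1 - z • A))
        + z • ((z • (1 : Matrix (Fin t) (Fin t) ℂ) - α) * (Q * A))
        + α * (Q * (1 - z • A)) := by
    simp only [Matrix.sub_mul, Matrix.mul_sub, Matrix.smul_mul, Matrix.mul_smul,
      smul_smul, smul_sub, Matrix.mul_one, Matrix.one_mul, Matrix.mul_assoc]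
    module
  have h1 : z • (γ * Y * ((Q - α * Q * A) * (X * B)))
      = γ * (Y * ((z • (Q - α * Q * A)) * (X * B))) := by
    simp [Matrix.mul_assoc, Matrix.smul_mul, Matrix.mul_smul]
  rw [h1, hM]
  simp [Matrix.add_mul, Matrix.mul_add, Matrix.mul_assoc, Matrix.smul_mul, Matrix.mul_smul,
    smul_add, hXB, hYc]

/-- any solution of the Riccati equation yields the factorization
`Ω(z) = Ψ(z)Θ(z)` at every point `z` where `I - zA` and `zI - α` are invertible. -/
theorem stmt_1 (m s t : ℕ) (hm : 0 < m) (hs : 0 < s) (ht : 0 < t)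
    (R₀ : Matrix (Fin m) (Fin m) ℂ) (C : Matrix (Fin m) (Fin s) ℂ)
    (A : Matrix (Fin s) (Fin s) ℂ) (B : Matrix (Fin s) (Fin m) ℂ)
    (γ : Matrix (Fin m) (Fin t) ℂ) (α : Matrix (Fin t) (Fin t) ℂ)
    (β : Matrix (Fin t) (Fin m) ℂ)
    (Q : Matrix (Fin t) (Fin s) ℂ)
    (hQinv : IsUnit (R₀ - γ * Q * B))
    (hQ : Q = α * Q * A + (β - α * Q * B) * (R₀ - γ * Q * B)⁻¹ * (C - γ * Q * A))
    (δ D : Matrix (Fin m) (Fin m) ℂ) (hδ : IsUnit δ) (hD : IsUnit D)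
    (hδD : δ * D = R₀ - γ * Q * B)
    (Ccirc : Matrix (Fin m) (Fin s) ℂ) (hCcirc : Ccirc = δ⁻¹ * (C - γ * Q * A))
    (βcirc : Matrix (Fin t) (Fin m) ℂ) (hβcirc : βcirc = (β - α * Q * B) * D⁻¹) :
    ∀ z : ℂ, IsUnit (1 - z • A) → IsUnit (z • (1 : Matrix (Fin t) (Fin t) ℂ) - α) →
      R₀ + z • (C * (1 - z • A)⁻¹ * B) + γ * (z • (1 : Matrix (Fin t) (Fin t) ℂ) - α)⁻¹ * β
        = (δ + γ * (z • (1 : Matrix (Fin t) (Fin t) ℂ) - α)⁻¹ * βcirc)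
          * (D + z • (Ccirc * (1 - z • A)⁻¹ * B)) := by
  intro z hA hα
  have hdA := (Matrix.isUnit_iff_isUnit_det _).mp hA
  have hdα := (Matrix.isUnit_iff_isUnit_det _).mp hα
  have hdδ := (Matrix.isUnit_iff_isUnit_det _).mp hδ
  have hdD := (Matrix.isUnit_iff_isUnit_det _).mp hD
  set X := (1 - z • A)⁻¹ with hXdef
  set Y := (z • (1 : Matrix (Fin t) (Fin t) ℂ) - α)⁻¹ with hYdef
  have hXl : (1 - z • A) * X = 1 := Matrix.mul_nonsing_inv _ hdA
  have hYr : Y * (z • (1 : Matrix (Fin t) (Fin t) ℂ) - α) = 1 := Matrix.nonsing_inv_mul _ hdα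
  have hδC : δ * Ccirc = C - γ * Q * A := by
    rw [hCcirc, ← Matrix.mul_assoc, Matrix.mul_nonsing_inv _ hdδ, Matrix.one_mul]
  have hβD : βcirc * D = β - α * Q * B := by
    rw [hβcirc, Matrix.mul_assoc, Matrix.nonsing_inv_mul _ hdD, Matrix.mul_one]
  have hβC : βcirc * Ccirc = Q - α * Q * A := by
    have h1 : βcirc * Ccirc = (β - α * Q * B) * (R₀ - γ * Q * B)⁻¹ * (C - γ * Q * A) := by
      rw [hβcirc, hCcirc, ← hδD, Matrix.mul_inv_rev]
      simp [Matrix.mul_assoc]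
    rw [h1, eq_sub_iff_add_eq, add_comm]
    exact hQ.symm
  have hδC' : δ * (Ccirc * (X * B)) = (C - γ * Q * A) * (X * B) := by
    rw [← Matrix.mul_assoc, hδC]
  have expand : (δ + γ * Y * βcirc) * (D + z • (Ccirc * X * B))
      = δ * D + z • (δ * (Ccirc * (X * B))) + γ * Y * (βcirc * D)
        + z • (γ * Y * ((βcirc * Ccirc) * (X * B))) := by
    simp only [Matrix.add_mul, Matrix.mul_add, Matrix.mul_smul, Matrix.smul_mul,
      smul_add, Matrix.mul_assoc]
    abel
  rw [expand, hδD, hδC', hβD, hβC, aux_key z Q A B γ α X Y hXl hYr]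
  simp only [Matrix.sub_mul, Matrix.mul_sub, smul_sub, Matrix.mul_assoc]
  module
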